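/- Let G be a group with elements g₁,…,g₄ and integers t₁₂₃, t₁₂₄, t₁₃₄, t₂₃₄ satisfying the listed commutator relations. Then for all integers a₁,…,a₄,b₁,…,b₄ one has (g₁^{a₁}g₂^{a₂}g₃^{a₃}g₄^{a₄})·(g₁^{b₁}g₂^{b₂}g₃^{b₃}g₄^{b₄}) = g₁^{p₁}g₂^{p₂}g₃^{p₃}g₄^{p₄}, where p₁ = a₁+b₁, p₂ = a₂+b₂, p₃ = a₃+b₃+t₁₂₃a₂b₁, and p₄ = a₄+b₄+t₁₂₄a₂b₁+t₁₃₄a₃b₁+t₂₃₄a₃b₂+t₁₂₃t₁₃₄a₂s₂(b₁)+t₁₂₃t₂₃₄s₂(a₂)b₁+t₁₂₃t₂₃₄a₂b₁b₂. -/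

import Mathlib

/-!
Right multiplication of a normal form `g₁^{a₁} g₂^{a₂} g₃^{a₃} g₄^{a₄}` by `g₄`, `g₃`, `g₂` or `g₁`
is again a normal form with explicit exponents: `g₄` is central and `g₃` commutes with `g₁, g₂`
up to powers of `g₄`; for `g₁` one moves it to the front, which conjugates `g₂^{a₂}` into
`(g₂ g₃^{t₁₂₃} g₄^{t₁₂₄})^{a₂}`, a power that is collected in the same way. Right multiplication by
`g_i^k` follows by induction on `k ∈ ℤ`, the quadratic terms `s₂` arising from
`s₂(k + 1) = s₂(k) + k`. Multiplying by `g₁^{b₁}`, `g₂^{b₂}`, `g₃^{b₃}`, `g₄^{b₄}` in turn yields the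
Hall polynomials.
-/

/-- `s₂(x) = x(x-1)/2` -/
def s2 (x : ℤ) : ℤ := x * (x - 1) / 2

theorem s2_zero : s2 0 = 0 := rfl

theorem s2_add_one (n : ℤ) : s2 (n + 1) = s2 n + n := by
  rw [s2, s2, add_sub_cancel_right, ← Int.add_mul_ediv_right _ _ two_ne_zero]
  ring_nf

section Group

variable {G : Type*} [Group G]

theorem mul_zpow_eq_of_forall_add_one_eq_mul {f : ℤ → G} {a b : G} (h0 : f 0 = b)
    (h : ∀ n, f (n + 1) = f n * a) (n : ℤ) : b * a ^ n = f n := by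
  induction n using Int.induction_on with
  | zero => simp [h0]
  | succ k ih => rw [h, ← ih, mul_assoc, zpow_add_one]
  | pred k ih =>
    rw [eq_mul_inv_iff_mul_eq.mpr (h (-k - 1)).symm, sub_add_cancel, ← ih, zpow_sub_one,
      mul_assoc]

theorem mul_eq_mul_mul_of_inv_mul_inv_mul_mul_eq {a b c : G} (h : a⁻¹ * b⁻¹ * a * b = c) :
    a * b = b * a * c := by
  rw [← h]; group

theorem commute_of_inv_mul_inv_mul_mul_eq_one {a b : G} (h : a⁻¹ * b⁻¹ * a * b = 1) :
    Commute a b := by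
  have h' := mul_eq_mul_mul_of_inv_mul_inv_mul_mul_eq h
  rwa [mul_one] at h'

theorem zpow_mul_eq_mul_zpow_mul_zpow {x y c : G} (h : y * x = x * y * c) (hc : Commute y c)
    (m : ℤ) : y ^ m * x = x * y ^ m * c ^ m := by
  have hconj : x⁻¹ * y * x⁻¹⁻¹ = y * c := by rw [inv_inv, mul_assoc, h]; group
  calc y ^ m * x = x * (x⁻¹ * y ^ m * x⁻¹⁻¹) := by group
    _ = x * y ^ m * c ^ m := by rw [← conj_zpow, hconj, hc.mul_zpow, mul_assoc]

end Group

structure HallRelations (G : Type*) [Group G] where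
  (g1 g2 g3 g4 : G)
  (t123 t124 t134 t234 : ℤ)
  comm21 : g2⁻¹ * g1⁻¹ * g2 * g1 = g3 ^ t123 * g4 ^ t124
  comm31 : g3⁻¹ * g1⁻¹ * g3 * g1 = g4 ^ t134
  comm32 : g3⁻¹ * g2⁻¹ * g3 * g2 = g4 ^ t234
  comm41 : g4⁻¹ * g1⁻¹ * g4 * g1 = 1
  comm42 : g4⁻¹ * g2⁻¹ * g4 * g2 = 1
  comm43 : g4⁻¹ * g3⁻¹ * g4 * g3 = 1

namespace HallRelations

variable {G : Type*} [Group G] (R : HallRelations G)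

def normalForm (a1 a2 a3 a4 : ℤ) : G := R.g1 ^ a1 * R.g2 ^ a2 * R.g3 ^ a3 * R.g4 ^ a4

theorem commute_g4_g1 : Commute R.g4 R.g1 := commute_of_inv_mul_inv_mul_mul_eq_one R.comm41

theorem commute_g4_g2 : Commute R.g4 R.g2 := commute_of_inv_mul_inv_mul_mul_eq_one R.comm42

theorem commute_g4_g3 : Commute R.g4 R.g3 := commute_of_inv_mul_inv_mul_mul_eq_one R.comm43

theorem g3_zpow_mul_g1 (a : ℤ) : R.g3 ^ a * R.g1 = R.g1 * R.g3 ^ a * R.g4 ^ (R.t134 * a) := by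
  rw [zpow_mul]
  exact zpow_mul_eq_mul_zpow_mul_zpow (mul_eq_mul_mul_of_inv_mul_inv_mul_mul_eq R.comm31)
    (R.commute_g4_g3.zpow_left _).symm a

theorem g3_zpow_mul_g2 (a : ℤ) : R.g3 ^ a * R.g2 = R.g2 * R.g3 ^ a * R.g4 ^ (R.t234 * a) := by
  rw [zpow_mul]
  exact zpow_mul_eq_mul_zpow_mul_zpow (mul_eq_mul_mul_of_inv_mul_inv_mul_mul_eq R.comm32)
    (R.commute_g4_g3.zpow_left _).symm a

theorem normalForm_mul_g4_zpow (a1 a2 a3 a4 k : ℤ) :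
    R.normalForm a1 a2 a3 a4 * R.g4 ^ k = R.normalForm a1 a2 a3 (a4 + k) := by
  rw [normalForm, normalForm, mul_assoc, zpow_add]

theorem normalForm_mul_g3_zpow (a1 a2 a3 a4 k : ℤ) :
    R.normalForm a1 a2 a3 a4 * R.g3 ^ k = R.normalForm a1 a2 (a3 + k) a4 := by
  rw [normalForm, normalForm, mul_assoc, (R.commute_g4_g3.zpow_zpow a4 k).eq, ← mul_assoc,
    mul_assoc _ (R.g3 ^ a3), zpow_add]

theorem normalForm_mul_g2 (a1 a2 a3 a4 : ℤ) :
    R.normalForm a1 a2 a3 a4 * R.g2 = R.normalForm a1 (a2 + 1) a3 (a4 + R.t234 * a3) := by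
  rw [normalForm, mul_assoc _ (R.g4 ^ a4), (R.commute_g4_g2.zpow_left a4).eq, ← mul_assoc,
    mul_assoc _ (R.g3 ^ a3), g3_zpow_mul_g2, normalForm, zpow_add_one]
  group

theorem normalForm_mul_g2_zpow (a1 a2 a3 a4 k : ℤ) :
    R.normalForm a1 a2 a3 a4 * R.g2 ^ k
      = R.normalForm a1 (a2 + k) a3 (a4 + R.t234 * a3 * k) := by
  refine mul_zpow_eq_of_forall_add_one_eq_mul
    (f := fun k => R.normalForm a1 (a2 + k) a3 (a4 + R.t234 * a3 * k)) (by simp) (fun k => ?_) k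
  rw [normalForm_mul_g2]
  congr 1 <;> ring

theorem g1_zpow_mul_normalForm (a1 a2 a3 a4 k : ℤ) :
    R.g1 ^ k * R.normalForm a1 a2 a3 a4 = R.normalForm (k + a1) a2 a3 a4 := by
  simp only [normalForm, zpow_add, mul_assoc]

theorem conj_g2_zpow (m : ℤ) :
    R.g1⁻¹ * R.g2 ^ m * R.g1
      = R.normalForm 0 m (R.t123 * m) (R.t124 * m + R.t123 * R.t234 * s2 m) := by
  have hconj : R.g1⁻¹ * R.g2 * R.g1⁻¹⁻¹ = R.g2 * R.g3 ^ R.t123 * R.g4 ^ R.t124 := by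
    rw [inv_inv, mul_assoc, mul_eq_mul_mul_of_inv_mul_inv_mul_mul_eq R.comm21]; group
  have hpow : 1 * (R.g2 * R.g3 ^ R.t123 * R.g4 ^ R.t124) ^ m
      = R.normalForm 0 m (R.t123 * m) (R.t124 * m + R.t123 * R.t234 * s2 m) := by
    refine mul_zpow_eq_of_forall_add_one_eq_mul
      (f := fun m => R.normalForm 0 m (R.t123 * m) (R.t124 * m + R.t123 * R.t234 * s2 m))
      (by simp [normalForm, s2_zero]) (fun m => ?_) m
    rw [← mul_assoc, ← mul_assoc, normalForm_mul_g2, normalForm_mul_g3_zpow,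
      normalForm_mul_g4_zpow, s2_add_one]
    congr 1 <;> ring
  rw [← hpow, ← hconj, conj_zpow, inv_inv, one_mul]

theorem normalForm_mul_g1 (a1 a2 a3 a4 : ℤ) :
    R.normalForm a1 a2 a3 a4 * R.g1 = R.normalForm (a1 + 1) a2 (a3 + R.t123 * a2)
      (a4 + R.t124 * a2 + R.t134 * a3 + R.t123 * R.t234 * s2 a2) := by
  calc R.normalForm a1 a2 a3 a4 * R.g1
      = R.g1 ^ (a1 + 1) * (R.g1⁻¹ * R.g2 ^ a2 * R.g1) * R.g3 ^ a3
          * R.g4 ^ (R.t134 * a3 + a4) := by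
        rw [normalForm, mul_assoc _ (R.g4 ^ a4), (R.commute_g4_g1.zpow_left a4).eq, ← mul_assoc,
          mul_assoc _ (R.g3 ^ a3), g3_zpow_mul_g1]
        group
    _ = _ := by
        rw [conj_g2_zpow, g1_zpow_mul_normalForm, normalForm_mul_g3_zpow, normalForm_mul_g4_zpow]
        congr 1 <;> ring

theorem normalForm_mul_g1_zpow (a1 a2 a3 a4 k : ℤ) :
    R.normalForm a1 a2 a3 a4 * R.g1 ^ k = R.normalForm (a1 + k) a2 (a3 + R.t123 * a2 * k)
      (a4 + R.t124 * a2 * k + R.t134 * a3 * k + R.t123 * R.t134 * a2 * s2 k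
        + R.t123 * R.t234 * s2 a2 * k) := by
  refine mul_zpow_eq_of_forall_add_one_eq_mul
    (f := fun k => R.normalForm (a1 + k) a2 (a3 + R.t123 * a2 * k)
      (a4 + R.t124 * a2 * k + R.t134 * a3 * k + R.t123 * R.t134 * a2 * s2 k
        + R.t123 * R.t234 * s2 a2 * k)) (by simp [s2_zero]) (fun k => ?_) k
  rw [normalForm_mul_g1, s2_add_one]
  congr 1 <;> ring

theorem normalForm_mul_normalForm (a1 a2 a3 a4 b1 b2 b3 b4 : ℤ) :
    R.normalForm a1 a2 a3 a4 * R.normalForm b1 b2 b3 b4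
      = R.normalForm (a1 + b1) (a2 + b2) (a3 + b3 + R.t123 * a2 * b1)
          (a4 + b4 + R.t124 * a2 * b1 + R.t134 * a3 * b1 + R.t234 * a3 * b2
            + R.t123 * R.t134 * a2 * s2 b1 + R.t123 * R.t234 * s2 a2 * b1
            + R.t123 * R.t234 * a2 * b1 * b2) := by
  calc R.normalForm a1 a2 a3 a4 * R.normalForm b1 b2 b3 b4
      = R.normalForm a1 a2 a3 a4 * R.g1 ^ b1 * R.g2 ^ b2 * R.g3 ^ b3 * R.g4 ^ b4 := by
        simp only [normalForm, mul_assoc]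
    _ = _ := by
        rw [normalForm_mul_g1_zpow, normalForm_mul_g2_zpow, normalForm_mul_g3_zpow,
          normalForm_mul_g4_zpow]
        congr 1 <;> ring

end HallRelations

/-- Hall polynomials for torsion free nilpotent groups of Hirsch length 4:
multiplication of normal forms is given by the polynomials `p₁,…,p₄`. -/
theorem hall_polynomials_length_four (G : Type*) [Group G] (g1 g2 g3 g4 : G)
    (t123 t124 t134 t234 : ℤ)
    (h21 : g2⁻¹ * g1⁻¹ * g2 * g1 = g3 ^ t123 * g4 ^ t124)
    (h31 : g3⁻¹ * g1⁻¹ * g3 * g1 = g4 ^ t134)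
    (h32 : g3⁻¹ * g2⁻¹ * g3 * g2 = g4 ^ t234)
    (h41 : g4⁻¹ * g1⁻¹ * g4 * g1 = 1)
    (h42 : g4⁻¹ * g2⁻¹ * g4 * g2 = 1)
    (h43 : g4⁻¹ * g3⁻¹ * g4 * g3 = 1) :
    ∀ a1 a2 a3 a4 b1 b2 b3 b4 : ℤ,
      (g1 ^ a1 * g2 ^ a2 * g3 ^ a3 * g4 ^ a4) * (g1 ^ b1 * g2 ^ b2 * g3 ^ b3 * g4 ^ b4)
        = g1 ^ (a1 + b1) * g2 ^ (a2 + b2) * g3 ^ (a3 + b3 + t123 * a2 * b1)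
            * g4 ^ (a4 + b4 + t124 * a2 * b1 + t134 * a3 * b1 + t234 * a3 * b2
                    + t123 * t134 * a2 * s2 b1 + t123 * t234 * s2 a2 * b1
                    + t123 * t234 * a2 * b1 * b2) :=
  HallRelations.normalForm_mul_normalForm
    ⟨g1, g2, g3, g4, t123, t124, t134, t234, h21, h31, h32, h41, h42, h43⟩
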